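/- The duality (symmetry) theorem for the RSK correspondence: if a bi-word w corresponds under RSK to the pair of tableaux (P, Q), then the dual bi-word w* (obtained by swapping the two rows of w and re-sorting the columns lexicographically) corresponds under RSK to the pair (Q, P). -/

import Mathlib

/-- Schensted row-insertion of `x` into a single row: returns the new row and
the bumped letter (if any). -/
def insertRow : List ℕ → ℕ → List ℕ × Option ℕ
  | [], x => ([x], none)
  | y :: r, x =>
      if x < y then (x :: r, some y)
      else
        let p := insertRow r x
        (y :: p.1, p.2)

/-- Row-insertion of a letter into a tableau, also returning the index of the
row in which a new box was created. -/
def insertT : List (List ℕ) → ℕ → List (List ℕ) × ℕ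
  | [], x => ([[x]], 0)
  | r :: t, x =>
      let p := insertRow r x
      match p.2 with
      | none => (p.1 :: t, 0)
      | some y =>
          let q := insertT t y
          (p.1 :: q.1, q.2 + 1)

/-- Add a box containing `i` at the end of row `k` of the recording tableau. -/
def addBox (q : List (List ℕ)) (k i : ℕ) : List (List ℕ) :=
  if k < q.length then q.set k (q.getD k [] ++ [i]) else q ++ [[i]]

/-- The RSK correspondence: a bi-word (list of columns, top entry first)
is sent to the pair (insertion tableau `P`, recording tableau `Q`). -/
def RSK (w : List (ℕ × ℕ)) : List (List ℕ) × List (List ℕ) :=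
  w.foldl (fun pq c =>
    let r := insertT pq.1 c.2
    (r.1, addBox pq.2 r.2 c.1)) ([], [])

/-- Lexicographic order on the columns of a bi-word. -/
def lexLe (p q : ℕ × ℕ) : Prop := p.1 < q.1 ∨ (p.1 = q.1 ∧ p.2 ≤ q.2)

instance : DecidableRel lexLe := fun p q => by unfold lexLe; infer_instance

/-- The dual bi-word: swap the two rows of each column and re-sort the
columns lexicographically. -/
def dualBiword (w : List (ℕ × ℕ)) : List (ℕ × ℕ) :=
  List.insertionSort lexLe (w.map Prod.swap)

namespace RSKD

lemma ir_none_of {R : List ℕ} {x : ℕ} (h : ∀ y ∈ R, ¬ x < y) :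
    insertRow R x = (R ++ [x], none) := by
  induction R with
  | nil => simp [insertRow]
  | cons y r ih =>
      have hy : ¬ x < y := h y (by simp)
      simp [insertRow, hy, ih (fun z hz => h z (by simp [hz]))]

lemma ir_none {R t : List ℕ} {x : ℕ} (h : insertRow R x = (t, none)) :
    t = R ++ [x] ∧ ∀ y ∈ R, y ≤ x := by
  induction R generalizing t with
  | nil => simp [insertRow] at h; simp [h.symm]
  | cons y r ih =>
      by_cases hy : x < y
      · simp [insertRow, hy] at h
      · rcases hr : insertRow r x with ⟨t', o⟩
        simp [insertRow, hy, hr] at h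
        obtain ⟨h1, h2⟩ := h
        subst h2
        obtain ⟨h3, h4⟩ := ih hr
        subst h3
        refine ⟨by simp [← h1], ?_⟩
        intro z hz
        simp at hz
        rcases hz with rfl | hz
        · omega
        · exact h4 z hz

lemma ir_some_perm {R t : List ℕ} {x z : ℕ} (h : insertRow R x = (t, some z)) :
    (z :: t).Perm (x :: R) := by
  induction R generalizing t with
  | nil => simp [insertRow] at h
  | cons y r ih =>
      by_cases hy : x < y
      · simp [insertRow, hy] at h
        obtain ⟨rfl, rfl⟩ := h
        exact List.Perm.swap _ _ _
      · rcases hr : insertRow r x with ⟨t', o⟩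
        simp [insertRow, hy, hr] at h
        obtain ⟨h1, h2⟩ := h
        subst h2
        have h2 := ih hr
        have e : (z :: t) = z :: y :: t' := by rw [← h1]
        rw [e]
        exact ((List.Perm.swap y z t').trans (h2.cons y)).trans (List.Perm.swap x y r)

lemma ir_some_lt {R t : List ℕ} {x z : ℕ} (h : insertRow R x = (t, some z)) :
    x < z := by
  induction R generalizing t with
  | nil => simp [insertRow] at h
  | cons y r ih =>
      by_cases hy : x < y
      · simp [insertRow, hy] at h
        omega
      · rcases hr : insertRow r x with ⟨t', o⟩
        simp [insertRow, hy, hr] at h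
        obtain ⟨h1, h2⟩ := h
        subst h2
        exact ih hr

lemma ir_some_len {R t : List ℕ} {x z : ℕ} (h : insertRow R x = (t, some z)) :
    t.length = R.length := by
  have := (ir_some_perm h).length_eq
  simpa using this

/-- structure of a bump on a sorted row -/
lemma ir_some_struct {R t : List ℕ} {x z : ℕ} (hR : R.Pairwise (· ≤ ·))
    (h : insertRow R x = (t, some z)) :
    t.Pairwise (· ≤ ·) ∧ (∀ u ∈ t, u ≤ x ∨ z ≤ u) := by
  induction R generalizing t with
  | nil => simp [insertRow] at h
  | cons y r ih =>
      by_cases hy : x < y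
      · simp [insertRow, hy] at h
        obtain ⟨rfl, rfl⟩ := h
        constructor
        · refine List.pairwise_cons.mpr ⟨?_, hR.of_cons⟩
          intro b hb
          exact le_of_lt (lt_of_lt_of_le hy (List.rel_of_pairwise_cons hR hb))
        · intro u hu
          simp at hu
          rcases hu with rfl | hu
          · exact Or.inl le_rfl
          · exact Or.inr (List.rel_of_pairwise_cons hR hu)
      · rcases hr : insertRow r x with ⟨t', o⟩
        simp [insertRow, hy, hr] at h
        obtain ⟨h1, h2⟩ := h
        subst h2
        obtain ⟨ih1, ih2⟩ := ih hR.of_cons hr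
        subst h1
        constructor
        · refine List.pairwise_cons.mpr ⟨?_, ih1⟩
          intro b hb
          have hb' := (ir_some_perm hr).mem_iff.mp (List.mem_cons_of_mem z hb)
          simp at hb'
          rcases hb' with rfl | hb'
          · omega
          · exact List.rel_of_pairwise_cons hR hb'
        · intro u hu
          simp at hu
          rcases hu with rfl | hu
          · left; omega
          · exact ih2 u hu

lemma ir_sorted {R t : List ℕ} {x : ℕ} {o : Option ℕ} (hR : R.Pairwise (· ≤ ·))
    (h : insertRow R x = (t, o)) : t.Pairwise (· ≤ ·) := by
  cases o with
  | none =>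
      obtain ⟨rfl, h2⟩ := ir_none h
      refine List.pairwise_append.mpr ⟨hR, by simp, ?_⟩
      intro a ha b hb
      simp at hb; subst hb
      exact h2 a ha
  | some z => exact (ir_some_struct hR h).1

lemma ir_prefix {P r : List ℕ} {x c : ℕ} (hP : ∀ y ∈ P, ¬ x < y) (hc : x < c) :
    insertRow (P ++ c :: r) x = (P ++ x :: r, some c) := by
  induction P with
  | nil => simp [insertRow, hc]
  | cons y p ih =>
      have hy : ¬ x < y := hP y (by simp)
      simp [insertRow, hy, ih (fun z hz => hP z (by simp [hz]))]

lemma ir_snoc_some {R t : List ℕ} {x z i : ℕ} (h : insertRow R x = (t, some z)) :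
    insertRow (R ++ [i]) x = (t ++ [i], some z) := by
  induction R generalizing t with
  | nil => simp [insertRow] at h
  | cons y r ih =>
      by_cases hy : x < y
      · simp [insertRow, hy] at h ⊢
        obtain ⟨rfl, rfl⟩ := h
        simp
      · rcases hr : insertRow r x with ⟨t', o⟩
        simp [insertRow, hy, hr] at h
        obtain ⟨h1, h2⟩ := h
        subst h2
        simp [insertRow, hy, ih hr, ← h1]

/-- One pass of row insertion along the first row, recording appended tops
(`Q1`) and the bumped bi-word (`B`). -/
def pass : List ℕ → List ℕ → List (ℕ × ℕ) → List ℕ × List ℕ × List (ℕ × ℕ)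
  | R, Q, [] => (R, Q, [])
  | R, Q, (a, b) :: w =>
      match insertRow R b with
      | (R', none) => pass R' (Q ++ [a]) w
      | (R', some y) =>
          let z := pass R' Q w
          (z.1, z.2.1, (a, y) :: z.2.2)

lemma pass_append (R Q : List ℕ) (v w : List (ℕ × ℕ)) :
    pass R Q (v ++ w) =
      ((pass (pass R Q v).1 (pass R Q v).2.1 w).1,
       (pass (pass R Q v).1 (pass R Q v).2.1 w).2.1,
       (pass R Q v).2.2 ++ (pass (pass R Q v).1 (pass R Q v).2.1 w).2.2) := by
  induction v generalizing R Q with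
  | nil => simp [pass]
  | cons c v ih =>
      obtain ⟨a, b⟩ := c
      rcases hr : insertRow R b with ⟨R', o⟩
      cases o with
      | none => simp [pass, hr, ih]
      | some y => simp [pass, hr, ih]

lemma pass_Q (R Q : List ℕ) (w : List (ℕ × ℕ)) :
    pass R Q w = ((pass R [] w).1, Q ++ (pass R [] w).2.1, (pass R [] w).2.2) := by
  induction w generalizing R Q with
  | nil => simp [pass]
  | cons c w ih =>
      obtain ⟨a, b⟩ := c
      rcases hr : insertRow R b with ⟨R', o⟩
      cases o with
      | none =>
          simp only [pass, hr]
          rw [ih R' (Q ++ [a]), ih R' ([] ++ [a])]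
          simp
      | some y =>
          simp only [pass, hr]
          rw [ih R' Q]

lemma pass_perm_bot (w : List (ℕ × ℕ)) : ∀ R Q : List ℕ,
    ((pass R Q w).1 ++ List.map Prod.snd (pass R Q w).2.2).Perm
      (R ++ List.map Prod.snd w) := by
  induction w with
  | nil => intro R Q; simp [pass]
  | cons c w ih =>
      intro R Q
      obtain ⟨a, b⟩ := c
      rcases hr : insertRow R b with ⟨R', o⟩
      cases o with
      | none =>
          obtain ⟨rfl, -⟩ := ir_none hr
          simp only [pass, hr, List.map_cons]
          refine (ih _ _).trans ?_
          rw [List.append_assoc]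
          exact List.Perm.refl _
      | some y =>
          simp only [pass, hr, List.map_cons]
          refine (List.perm_middle).trans ?_
          refine ((ih R' Q).cons y).trans ?_
          have h1 : (y :: (R' ++ List.map Prod.snd w)) = (y :: R') ++ List.map Prod.snd w := rfl
          rw [h1]
          refine (((ir_some_perm hr)).append_right _).trans ?_
          exact List.perm_middle.symm

lemma pass_perm_top (w : List (ℕ × ℕ)) : ∀ R Q : List ℕ,
    ((pass R Q w).2.1 ++ List.map Prod.fst (pass R Q w).2.2).Perm
      (Q ++ List.map Prod.fst w) := by
  induction w with
  | nil => intro R Q; simp [pass]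
  | cons c w ih =>
      intro R Q
      obtain ⟨a, b⟩ := c
      rcases hr : insertRow R b with ⟨R', o⟩
      cases o with
      | none =>
          simp only [pass, hr, List.map_cons]
          refine (ih _ _).trans ?_
          rw [List.append_assoc]
          exact List.Perm.refl _
      | some y =>
          simp only [pass, hr, List.map_cons]
          refine (List.perm_middle).trans ?_
          refine ((ih R' Q).cons a).trans ?_
          exact List.perm_middle.symm

lemma pass_R_sorted (w : List (ℕ × ℕ)) : ∀ R Q : List ℕ, R.Pairwise (· ≤ ·) →
    (pass R Q w).1.Pairwise (· ≤ ·) := by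
  induction w with
  | nil => intro R Q h; simpa [pass] using h
  | cons c w ih =>
      intro R Q h
      obtain ⟨a, b⟩ := c
      rcases hr : insertRow R b with ⟨R', o⟩
      cases o with
      | none => simp only [pass, hr]; exact ih _ _ (ir_sorted h hr)
      | some y => simp only [pass, hr]; exact ih _ _ (ir_sorted h hr)

lemma pass_R_len (w : List (ℕ × ℕ)) : ∀ R Q : List ℕ,
    R.length ≤ (pass R Q w).1.length := by
  induction w with
  | nil => intro R Q; simp [pass]
  | cons c w ih =>
      intro R Q
      obtain ⟨a, b⟩ := c
      rcases hr : insertRow R b with ⟨R', o⟩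
      cases o with
      | none =>
          obtain ⟨rfl, -⟩ := ir_none hr
          simp only [pass, hr]
          have := ih (R ++ [b]) (Q ++ [a])
          simp at this
          omega
      | some y =>
          simp only [pass, hr]
          have := ih R' Q
          have := ir_some_len hr
          omega

lemma pass_Q1_sublist (w : List (ℕ × ℕ)) : ∀ R : List ℕ,
    (pass R [] w).2.1.Sublist (List.map Prod.fst w) := by
  induction w with
  | nil => intro R; simp [pass]
  | cons c w ih =>
      intro R
      obtain ⟨a, b⟩ := c
      rcases hr : insertRow R b with ⟨R', o⟩
      cases o with
      | none =>
          simp only [pass, hr, List.map_cons]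
          rw [pass_Q R' ([] ++ [a])]
          simpa using (ih R').cons₂ a
      | some y =>
          simp only [pass, hr, List.map_cons]
          exact (ih R').trans (List.sublist_cons_self a _)

instance : IsTrans (ℕ × ℕ) lexLe where
  trans := by
    rintro ⟨a, b⟩ ⟨c, d⟩ ⟨e, f⟩ h1 h2
    simp only [lexLe] at *
    omega

instance : IsTotal (ℕ × ℕ) lexLe where
  total := by
    rintro ⟨a, b⟩ ⟨c, d⟩
    simp only [lexLe]
    omega

instance : IsAntisymm (ℕ × ℕ) lexLe where
  antisymm := by
    rintro ⟨a, b⟩ ⟨c, d⟩ h1 h2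
    simp only [lexLe] at *
    have : a = c := by omega
    subst this
    simp only [Prod.mk.injEq, true_and]
    omega

lemma dualBiword_sorted (w : List (ℕ × ℕ)) : (dualBiword w).Pairwise lexLe :=
  List.pairwise_insertionSort lexLe _

lemma dualBiword_perm (w : List (ℕ × ℕ)) : (dualBiword w).Perm (w.map Prod.swap) :=
  List.perm_insertionSort lexLe _

/-- a sorted list that is a permutation of `map swap w` is `dualBiword w` -/
lemma dualBiword_eq {w v : List (ℕ × ℕ)} (hs : v.Pairwise lexLe)
    (hp : v.Perm (w.map Prod.swap)) : v = dualBiword w :=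
  List.Perm.eq_of_pairwise' hs (dualBiword_sorted w) (hp.trans (dualBiword_perm w).symm)

/-- Claim A: the bumped bi-word of a sorted bi-word is sorted. -/
lemma pass_B_sorted_aux (w : List (ℕ × ℕ)) : ∀ (R Q : List ℕ) (a₀ m₁ m₂ : ℕ),
    R.Pairwise (· ≤ ·) → w.Pairwise lexLe → (∀ p ∈ w, lexLe (a₀, m₁) p) →
    (∀ x ∈ R, x ≤ m₁ ∨ m₂ ≤ x) →
    (pass R Q w).2.2.Pairwise lexLe ∧ ∀ q ∈ (pass R Q w).2.2, lexLe (a₀, m₂) q := by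
  induction w with
  | nil => intro R Q a₀ m₁ m₂ _ _ _ _; simp [pass]
  | cons c w ih =>
      intro R Q a₀ m₁ m₂ hR hw hab hinv
      obtain ⟨a, b⟩ := c
      have hw' : w.Pairwise lexLe := hw.of_cons
      have habw : ∀ p ∈ w, lexLe (a, b) p := fun p hp => List.rel_of_pairwise_cons hw hp
      have hab0 : lexLe (a₀, m₁) (a, b) := hab (a, b) (by simp)
      rcases hr : insertRow R b with ⟨R', o⟩
      cases o with
      | none =>
          obtain ⟨rfl, hle⟩ := ir_none hr
          simp only [pass, hr]
          have hinv' : ∀ x ∈ R ++ [b], x ≤ b ∨ m₂ ≤ x := by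
            intro x hx
            simp at hx
            rcases hx with hx | rfl
            · exact Or.inl (hle x hx)
            · exact Or.inl le_rfl
          obtain ⟨hs, hq⟩ := ih _ (Q ++ [a]) a b m₂ (ir_sorted hR hr) hw' habw hinv'
          refine ⟨hs, ?_⟩
          intro q hq'
          have := hq q hq'
          simp only [lexLe] at this hab0 ⊢
          omega
      | some y =>
          simp only [pass, hr]
          have hby : b < y := ir_some_lt hr
          have hyR : y ∈ R := by
            have h1 : y ∈ b :: R := (ir_some_perm hr).subset (by simp)
            simp at h1
            rcases h1 with rfl | h1
            · omega
            · exact h1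
          obtain ⟨hR', hsplit⟩ := ir_some_struct hR hr
          have hinv' : ∀ x ∈ R', x ≤ b ∨ y ≤ x := hsplit
          obtain ⟨hs, hq⟩ := ih R' Q a b y hR' hw' habw hinv'
          have hkey : ∀ q ∈ (pass R' Q w).2.2, lexLe (a, y) q := hq
          have hym : y ≤ m₁ ∨ m₂ ≤ y := hinv y hyR
          refine ⟨List.pairwise_cons.mpr ⟨hkey, hs⟩, ?_⟩
          intro q hq'
          simp at hq'
          rcases hq' with rfl | hq'
          · simp only [lexLe] at hab0 ⊢
            rcases hab0 with h | ⟨rfl, h⟩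
            · exact Or.inl h
            · right; exact ⟨rfl, by omega⟩
          · have := hkey q hq'
            simp only [lexLe] at this hab0 ⊢
            omega

lemma pass_B_sorted {w : List (ℕ × ℕ)} (hw : w.Pairwise lexLe) :
    (pass [] [] w).2.2.Pairwise lexLe :=
  (pass_B_sorted_aux w [] [] 0 0 0 (by simp) hw
    (by rintro ⟨x, y⟩ _; simp [lexLe]; omega) (by simp)).1

/-- Key perturbation lemma: tracking one extra maximal entry `i` at the end of
the first row. Either it is never bumped (no appends happen), or it is bumped
at the first append. -/
lemma pert (b : List (ℕ × ℕ)) : ∀ (R Q Q' : List ℕ) (i : ℕ),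
    (∀ p ∈ b, p.2 < i) →
    ((pass R Q b).2.1 = Q ∧ (pass (R ++ [i]) Q' b).1 = (pass R Q b).1 ++ [i] ∧
      (pass (R ++ [i]) Q' b).2.2 = (pass R Q b).2.2) ∨
    (∃ c r, (pass R Q b).2.1 = Q ++ c :: r ∧ (pass (R ++ [i]) Q' b).1 = (pass R Q b).1 ∧
      (pass (R ++ [i]) Q' b).2.2.Perm ((c, i) :: (pass R Q b).2.2)) := by
  induction b with
  | nil => intro R Q Q' i _; left; simp [pass]
  | cons c b ih =>
      intro R Q Q' i hb
      obtain ⟨x, y⟩ := c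
      have hy : y < i := hb (x, y) (by simp)
      have hb' : ∀ p ∈ b, p.2 < i := fun p hp => hb p (by simp [hp])
      rcases hr : insertRow R y with ⟨R', o⟩
      cases o with
      | some z =>
          have hr2 : insertRow (R ++ [i]) y = (R' ++ [i], some z) := ir_snoc_some hr
          simp only [pass, hr, hr2]
          rcases ih R' Q Q' i hb' with ⟨h1, h2, h3⟩ | ⟨c', r', h1, h2, h3⟩
          · left; exact ⟨h1, h2, by rw [h3]⟩
          · right
            refine ⟨c', r', h1, h2, ?_⟩
            exact (h3.cons (x, z)).trans (List.Perm.swap _ _ _)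
      | none =>
          obtain ⟨rfl, hle⟩ := ir_none hr
          have hr2 : insertRow (R ++ [i]) y = (R ++ [y], some i) := by
            have := ir_prefix (P := R) (r := []) (x := y) (c := i)
              (fun u hu => by have := hle u hu; omega) hy
            simpa using this
          simp only [pass, hr, hr2]
          right
          refine ⟨x, (pass (R ++ [y]) [] b).2.1, ?_, ?_, ?_⟩
          · rw [pass_Q (R ++ [y]) (Q ++ [x])]; simp
          · rw [pass_Q (R ++ [y]) Q', pass_Q (R ++ [y]) (Q ++ [x])]
          · rw [pass_Q (R ++ [y]) Q', pass_Q (R ++ [y]) (Q ++ [x])]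

lemma perm_cancel_right {α : Type} {l1 l2 s1 s2 : List α} (hs : s1.Perm s2)
    (h : (l1 ++ s1).Perm (l2 ++ s2)) : l1.Perm l2 := by
  rw [← Multiset.coe_eq_coe] at *
  rw [← Multiset.coe_add, ← Multiset.coe_add] at h
  rw [hs] at h
  exact add_right_cancel h

lemma sorted_map_fst {w : List (ℕ × ℕ)} (hw : w.Pairwise lexLe) :
    (w.map Prod.fst).Pairwise (· ≤ ·) := by
  rw [List.pairwise_map]
  refine hw.imp ?_
  intro p q hpq
  simp only [lexLe] at hpq
  omega

/-- From the bumped-word duality, derive the duality of the first rows `R` and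
first recording rows `Q1`, by multiset conservation and sortedness. -/
lemma RQdual {w : List (ℕ × ℕ)} (hw : w.Pairwise lexLe)
    (hB : (pass [] [] (dualBiword w)).2.2.Perm
      (List.map Prod.swap (pass [] [] w).2.2)) :
    (pass [] [] (dualBiword w)).1 = (pass [] [] w).2.1 ∧
    (pass [] [] (dualBiword w)).2.1 = (pass [] [] w).1 := by
  have hmapsnd : (List.map Prod.snd (dualBiword w)).Perm (List.map Prod.fst w) := by
    have := (dualBiword_perm w).map Prod.snd
    simpa [Function.comp_def] using this
  have hmapfst : (List.map Prod.fst (dualBiword w)).Perm (List.map Prod.snd w) := by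
    have := (dualBiword_perm w).map Prod.fst
    simpa [Function.comp_def] using this
  have hBsnd : (List.map Prod.snd (pass [] [] (dualBiword w)).2.2).Perm
      (List.map Prod.fst (pass [] [] w).2.2) := by
    have := hB.map Prod.snd
    simpa [Function.comp_def] using this
  have hBfst : (List.map Prod.fst (pass [] [] (dualBiword w)).2.2).Perm
      (List.map Prod.snd (pass [] [] w).2.2) := by
    have := hB.map Prod.fst
    simpa [Function.comp_def] using this
  constructor
  · -- R(w*) = Q1(w)
    have h1 := pass_perm_bot (dualBiword w) [] []
    have h2 := pass_perm_top w [] []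
    have hperm : (pass [] [] (dualBiword w)).1.Perm (pass [] [] w).2.1 := by
      refine perm_cancel_right hBsnd ?_
      refine ((h1.trans ?_).trans h2.symm)
      simpa using hmapsnd
    have s1 : (pass [] [] (dualBiword w)).1.Pairwise (· ≤ ·) :=
      pass_R_sorted _ _ _ (by simp)
    have s2 : (pass [] [] w).2.1.Pairwise (· ≤ ·) :=
      (sorted_map_fst hw).sublist (pass_Q1_sublist w [])
    exact List.Perm.eq_of_pairwise' s1 s2 hperm
  · -- Q1(w*) = R(w)
    have h1 := pass_perm_top (dualBiword w) [] []
    have h2 := pass_perm_bot w [] []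
    have hperm : (pass [] [] (dualBiword w)).2.1.Perm (pass [] [] w).1 := by
      refine perm_cancel_right hBfst ?_
      refine ((h1.trans ?_).trans h2.symm)
      simpa using hmapfst
    have s1 : (pass [] [] (dualBiword w)).2.1.Pairwise (· ≤ ·) :=
      (sorted_map_fst (dualBiword_sorted w)).sublist (pass_Q1_sublist (dualBiword w) [])
    have s2 : (pass [] [] w).1.Pairwise (· ≤ ·) :=
      pass_R_sorted _ _ _ (by simp)
    exact List.Perm.eq_of_pairwise' s1 s2 hperm

lemma dualBiword_nil : dualBiword [] = [] := rfl

lemma mem_pass_R {w : List (ℕ × ℕ)} {R Q : List ℕ} {x : ℕ}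
    (hx : x ∈ (pass R Q w).1) : x ∈ R ∨ x ∈ List.map Prod.snd w := by
  have := (pass_perm_bot w R Q).subset (List.mem_append_left _ hx)
  simpa using this

lemma mem_pass_Q1 {w : List (ℕ × ℕ)} {R Q : List ℕ} {x : ℕ}
    (hx : x ∈ (pass R Q w).2.1) : x ∈ Q ∨ x ∈ List.map Prod.fst w := by
  have := (pass_perm_top w R Q).subset (List.mem_append_left _ hx)
  simpa using this

lemma mem_dropWhile_not {l : List (ℕ × ℕ)} (hl : l.Pairwise lexLe) (z : ℕ × ℕ) :
    ∀ p ∈ l.dropWhile (fun p => decide (lexLe p z)), ¬ lexLe p z := by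
  induction l with
  | nil => simp
  | cons x l ih =>
      by_cases hx : lexLe x z
      · rw [List.dropWhile_cons_of_pos (by simpa using hx)]
        exact ih hl.of_cons
      · rw [List.dropWhile_cons_of_neg (by simpa using hx)]
        intro p hp
        simp at hp
        rcases hp with rfl | hp
        · exact hx
        · intro hcon
          exact hx (Trans.trans (List.rel_of_pairwise_cons hl hp) hcon)

/-- The central duality for the bumped bi-word: the bumped bi-word of the dual
bi-word is a permutation of the swap of the bumped bi-word. -/
lemma Bdual : ∀ (n : ℕ) (w : List (ℕ × ℕ)), w.length ≤ n → w.Pairwise lexLe →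
    (pass [] [] (dualBiword w)).2.2.Perm
      (List.map Prod.swap (pass [] [] w).2.2) := by
  intro n
  induction n with
  | zero =>
      intro w hlen _
      have : w = [] := List.eq_nil_of_length_eq_zero (Nat.le_zero.mp hlen)
      subst this
      simp [dualBiword_nil, pass]
  | succ n ihn =>
      intro w hlen hw
      rcases List.eq_nil_or_concat w with rfl | ⟨u, ⟨i, j⟩, rfl⟩
      · simp [dualBiword_nil, pass]
      · simp only [List.concat_eq_append] at hlen hw ⊢
        have hu : u.Pairwise lexLe := hw.sublist (List.sublist_append_left u _)
        have hmax : ∀ p ∈ u, lexLe p (i, j) := fun p hp =>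
          (List.pairwise_append.mp hw).2.2 p hp (i, j) (by simp)
        have htopu : ∀ p ∈ u, p.1 ≤ i := by
          intro p hp; have := hmax p hp; simp only [lexLe] at this; omega
        have hulen : u.length ≤ n := by simp at hlen; omega
        have hBu := ihn u hulen hu
        obtain ⟨hRdu, hQdu⟩ := RQdual hu hBu
        set du := dualBiword u with hdu
        have hdus : du.Pairwise lexLe := dualBiword_sorted u
        set a := du.takeWhile (fun p => decide (lexLe p (j, i))) with hadef
        set b := du.dropWhile (fun p => decide (lexLe p (j, i))) with hbdef
        have hab : a ++ b = du := by
          rw [hadef, hbdef]; exact List.takeWhile_append_dropWhile (p := _) (l := _)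
        have hmemdu : ∀ p ∈ du, (p.2, p.1) ∈ u := by
          intro p hp
          have h1 : p ∈ u.map Prod.swap := (dualBiword_perm u).subset hp
          simp only [List.mem_map] at h1
          obtain ⟨q, hq, rfl⟩ := h1
          simpa [Prod.swap] using hq
        have hamem : ∀ p ∈ a, lexLe p (j, i) := by
          intro q hq
          rw [hadef] at hq
          have h7 := List.mem_takeWhile_imp hq
          simpa using h7
        have hbnot : ∀ p ∈ b, ¬ lexLe p (j, i) := mem_dropWhile_not hdus (j, i)
        have hbmem : ∀ p ∈ b, j < p.1 ∧ p.2 < i := by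
          intro p hp
          have hpdu : p ∈ du := by rw [← hab]; exact List.mem_append_right _ hp
          have hswap := hmemdu p hpdu
          have hple : p.2 ≤ i := htopu _ hswap
          have hnle := hbnot p hp
          have hlex2 := hmax _ hswap
          rcases p with ⟨x, y⟩
          simp only [lexLe] at hnle hlex2
          simp only [] at hple ⊢
          constructor
          · omega
          · omega
        have hsplit : dualBiword (u ++ [(i, j)]) = a ++ (j, i) :: b := by
          symm
          apply dualBiword_eq
          · refine List.pairwise_append.mpr ⟨hdus.sublist (by rw [← hab]; exact List.sublist_append_left _ _), ?_, ?_⟩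
            · refine List.pairwise_cons.mpr ⟨?_, hdus.sublist (by rw [← hab]; exact List.sublist_append_right _ _)⟩
              intro p hp
              rcases total_of lexLe p (j, i) with h | h
              · exact absurd h (hbnot p hp)
              · exact h
            · intro p hp q hq
              simp at hq
              rcases hq with rfl | hq
              · exact hamem p hp
              · rcases total_of lexLe q (j, i) with h | h
                · exact absurd h (hbnot q hq)
                · exact Trans.trans (hamem p hp) h
          · refine List.Perm.trans List.perm_middle ?_
            rw [hab]
            refine List.Perm.trans ((dualBiword_perm u).cons (j, i)) ?_
            simp only [List.map_append, List.map_cons, List.map_nil]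
            exact (List.perm_append_singleton _ _).symm
        set Ra := (pass [] [] a).1 with hRadef
        set Qa := (pass [] [] a).2.1 with hQadef
        set Ba := (pass [] [] a).2.2 with hBadef
        have hRa_le : ∀ y ∈ Ra, y ≤ i := by
          intro y hy
          rcases mem_pass_R hy with h | h
          · simp at h
          · simp only [List.mem_map] at h
            obtain ⟨p, hp, rfl⟩ := h
            have hpdu : p ∈ du := by rw [← hab]; exact List.mem_append_left _ hp
            exact htopu _ (hmemdu p hpdu)
        have hQa_le : ∀ y ∈ Qa, y ≤ j := by
          intro y hy
          rcases mem_pass_Q1 hy with h | h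
          · simp at h
          · simp only [List.mem_map] at h
            obtain ⟨p, hp, rfl⟩ := h
            have := hamem p hp
            simp only [lexLe] at this
            omega
        have hstep : insertRow Ra i = (Ra ++ [i], none) :=
          ir_none_of (fun y hy => by have := hRa_le y hy; omega)
        have hdw : (pass [] [] (dualBiword (u ++ [(i, j)]))).2.2
            = Ba ++ (pass (Ra ++ [i]) (Qa ++ [j]) b).2.2 := by
          rw [hsplit, pass_append]
          simp only [pass, hstep, ← hRadef, ← hQadef, ← hBadef]
        have hdu2 : (pass [] [] du).2.2 = Ba ++ (pass Ra Qa b).2.2 := by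
          rw [← hab, pass_append]
        have hduQ : (pass [] [] du).2.1 = (pass Ra Qa b).2.1 := by
          rw [← hab, pass_append]
        set Ru := (pass [] [] u).1 with hRudef
        set Q1u := (pass [] [] u).2.1 with hQ1udef
        set Bu := (pass [] [] u).2.2 with hBudef
        have hRu : Ru = (pass Ra Qa b).2.1 := by rw [← hduQ, hQdu]
        rcases pert b Ra Qa (Qa ++ [j]) i (fun p hp => (hbmem p hp).2)
          with ⟨h1, h2, h3⟩ | ⟨c, r, h1, h2, h3⟩
        · -- the last column appends on both sides
          have hRuQa : Ru = Qa := by rw [hRu, h1]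
          have hins : insertRow Ru j = (Ru ++ [j], none) :=
            ir_none_of (fun y hy => by
              have := hQa_le y (by rw [← hRuQa]; exact hy); omega)
          have hw1 : (pass [] [] (u ++ [(i, j)])).2.2 = Bu := by
            rw [pass_append, ← hRudef, ← hQ1udef, ← hBudef]
            simp [pass, hins]
          rw [hdw, h3, hw1, ← hdu2]
          exact hBu
        · -- the last column bumps on both sides
          have hRuQa : Ru = Qa ++ c :: r := by rw [hRu, h1]
          have hcr : (pass Ra [] b).2.1 = c :: r := by
            have h6 := pass_Q Ra Qa b
            have h5 : Qa ++ (pass Ra [] b).2.1 = Qa ++ c :: r := by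
              rw [← h1, h6]
            exact List.append_cancel_left h5
          have hcb : j < c := by
            have hcmem : c ∈ (pass Ra [] b).2.1 := by rw [hcr]; simp
            have := (pass_Q1_sublist b Ra).subset hcmem
            simp only [List.mem_map] at this
            obtain ⟨p, hp, rfl⟩ := this
            exact (hbmem p hp).1
          have hbump : insertRow Ru j = (Qa ++ j :: r, some c) := by
            rw [hRuQa]
            exact ir_prefix (fun y hy => by have := hQa_le y hy; omega) hcb
          have hw1 : (pass [] [] (u ++ [(i, j)])).2.2 = Bu ++ [(i, c)] := by
            rw [pass_append, ← hRudef, ← hQ1udef, ← hBudef]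
            simp [pass, hbump]
          rw [hdw, hw1]
          refine List.Perm.trans (List.Perm.append_left Ba h3) ?_
          refine List.Perm.trans List.perm_middle ?_
          rw [← hdu2]
          refine List.Perm.trans (hBu.cons (c, i)) ?_
          simp only [List.map_append, List.map_cons, List.map_nil, Prod.swap_prod_mk]
          exact (List.perm_append_singleton _ _).symm

/-- The folding step of `RSK`. -/
def RSKstep (pq : List (List ℕ) × List (List ℕ)) (c : ℕ × ℕ) :
    List (List ℕ) × List (List ℕ) :=
  ((insertT pq.1 c.2).1, addBox pq.2 (insertT pq.1 c.2).2 c.1)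

lemma RSK_eq_foldl (w : List (ℕ × ℕ)) : RSK w = w.foldl RSKstep ([], []) := rfl

lemma addBox_zero (Q : List ℕ) (q : List (List ℕ)) (x : ℕ) :
    addBox (Q :: q) 0 x = (Q ++ [x]) :: q := by
  simp [addBox]

lemma addBox_succ (Q : List ℕ) (q : List (List ℕ)) (k x : ℕ) :
    addBox (Q :: q) (k + 1) x = Q :: addBox q k x := by
  by_cases h : k < q.length
  · simp [addBox, h, Nat.succ_lt_succ h]
  · have h2 : ¬ (k + 1 < (Q :: q).length) := by simp; omega
    simp [addBox, h, h2]

lemma fuse (w : List (ℕ × ℕ)) : ∀ (R Q : List ℕ) (t q : List (List ℕ)),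
    List.foldl RSKstep (R :: t, Q :: q) w =
      ((pass R Q w).1 :: (List.foldl RSKstep (t, q) (pass R Q w).2.2).1,
       (pass R Q w).2.1 :: (List.foldl RSKstep (t, q) (pass R Q w).2.2).2) := by
  induction w with
  | nil => intro R Q t q; simp [pass]
  | cons c w ih =>
      intro R Q t q
      obtain ⟨a, b⟩ := c
      rcases hr : insertRow R b with ⟨R', o⟩
      cases o with
      | none =>
          have hstep : RSKstep (R :: t, Q :: q) (a, b) = (R' :: t, (Q ++ [a]) :: q) := by
            simp [RSKstep, insertT, hr, addBox_zero]
          simp only [List.foldl_cons, hstep, pass, hr]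
          exact ih R' (Q ++ [a]) t q
      | some y =>
          have hstep : RSKstep (R :: t, Q :: q) (a, b)
              = (R' :: (insertT t y).1, Q :: addBox q (insertT t y).2 a) := by
            simp [RSKstep, insertT, hr, addBox_succ]
          simp only [List.foldl_cons, hstep, pass, hr]
          rw [ih R' Q (insertT t y).1 (addBox q (insertT t y).2 a)]
          have h2 : List.foldl RSKstep (t, q) ((a, y) :: (pass R' Q w).2.2)
              = List.foldl RSKstep ((insertT t y).1, addBox q (insertT t y).2 a)
                  (pass R' Q w).2.2 := by
            simp [RSKstep]
          rw [← h2]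
          simp

lemma RSK_decomp (w : List (ℕ × ℕ)) (hw : w ≠ []) :
    RSK w = ((pass [] [] w).1 :: (RSK (pass [] [] w).2.2).1,
             (pass [] [] w).2.1 :: (RSK (pass [] [] w).2.2).2) := by
  rcases w with _ | ⟨⟨a, b⟩, w⟩
  · exact absurd rfl hw
  · have h0 : insertRow [] b = ([b], none) := by simp [insertRow]
    have h1 : RSKstep ([], []) (a, b) = ([[b]], [[a]]) := by
      simp [RSKstep, insertT, addBox]
    have h2 : pass [] [] ((a, b) :: w) = pass [b] [a] w := by
      simp [pass, h0]
    rw [RSK_eq_foldl, List.foldl_cons, h1]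
    rw [show ([[b]], [[a]]) = ([b] :: ([] : List (List ℕ)), [a] :: ([] : List (List ℕ))) from rfl]
    rw [fuse, h2, RSK_eq_foldl]

lemma B_len_lt (w : List (ℕ × ℕ)) (hw : w ≠ []) :
    (pass [] [] w).2.2.length < w.length := by
  have hperm := (pass_perm_bot w [] []).length_eq
  simp only [List.length_append, List.length_map, List.nil_append] at hperm
  have hR : 1 ≤ (pass [] [] w).1.length := by
    rcases w with _ | ⟨⟨a, b⟩, w⟩
    · exact absurd rfl hw
    · have h0 : insertRow [] b = ([b], none) := by simp [insertRow]
      have h2 : pass [] [] ((a, b) :: w) = pass [b] [a] w := by simp [pass, h0]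
      rw [h2]
      have := pass_R_len w [b] [a]
      simpa using this
  have hwlen : w.length ≠ 0 := by simpa using List.length_pos_iff.mpr hw |>.ne'
  omega

end RSKD


open RSKD

/-- Duality (symmetry) theorem for RSK: if the bi-word `w` corresponds to the
pair `(P, Q)`, then its dual bi-word corresponds to `(Q, P)`. -/
theorem RSK_dual (w : List (ℕ × ℕ)) (hw : w.Pairwise lexLe) :
    RSK (dualBiword w) = ((RSK w).2, (RSK w).1) := by
  suffices H : ∀ (n : ℕ) (w : List (ℕ × ℕ)), w.length ≤ n → w.Pairwise lexLe →
      RSK (dualBiword w) = ((RSK w).2, (RSK w).1) from H w.length w le_rfl hw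
  intro n
  induction n with
  | zero =>
      intro w hlen _
      have : w = [] := List.eq_nil_of_length_eq_zero (Nat.le_zero.mp hlen)
      subst this
      rfl
  | succ n ih =>
      intro w hlen hw
      rcases eq_or_ne w [] with rfl | hne
      · rfl
      · have hB := Bdual w.length w le_rfl hw
        obtain ⟨hR, hQ⟩ := RQdual hw hB
        have hBs := pass_B_sorted hw
        have hBds : (pass [] [] (dualBiword w)).2.2 = dualBiword (pass [] [] w).2.2 :=
          dualBiword_eq (pass_B_sorted (dualBiword_sorted w)) hB
        have hlt := B_len_lt w hne
        have ihB := ih (pass [] [] w).2.2 (by omega) hBs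
        have hdne : dualBiword w ≠ [] := by
          intro hcon
          have hl := (dualBiword_perm w).length_eq
          rw [hcon] at hl
          simp at hl
          exact hne (List.eq_nil_of_length_eq_zero hl.symm)
        rw [RSK_decomp _ hdne, RSK_decomp _ hne, hBds, ihB, hR, hQ]
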